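/- Let add : ℕ → ℕ → ℕ, neg : ℕ → ℕ, and 0̂ ∈ ℕ be a computable abelian group structure on ℕ, and let b ∈ ℕ with b ≠ 0̂ be an element of finite order d. If d is even, then there exists a computable coloring c : ℕ → {0,1} with 2 colors such that there are no x, y ∈ ℕ with c(x) = c(y) and add(x, neg(y)) = b; if d is odd, then there exists a computable coloring c : ℕ → {0,1,2} with 3 colors with the same property. -/

import Mathlib

/-- The `d`-fold sum `b + b + ⋯ + b` (with `d = 0` giving `z`) in the group on `ℕ` with
addition `add` and identity `z`. -/
def iterAdd (add : ℕ → ℕ → ℕ) (z b : ℕ) : ℕ → ℕ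
  | 0 => z
  | d + 1 => add b (iterAdd add z b d)

namespace CCF

def G (add : ℕ → ℕ → ℕ) (b : ℕ) : ℕ → ℕ → ℕ
  | 0, y => y
  | k+1, y => add b (G add b k y)

def M (add : ℕ → ℕ → ℕ) (b : ℕ) : ℕ → ℕ → ℕ
  | 0, y => y
  | k+1, y => min (M add b k y) (G add b (k+1) y)

def S (add : ℕ → ℕ → ℕ) (b d : ℕ) : ℕ → ℕ → ℕ
  | 0, _ => 0
  | k+1, y => S add b d k y +
      (bif decide (G add b (k+1) (M add b (d-1) y) = y) then k+1 else 0)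

def idx (add : ℕ → ℕ → ℕ) (b d y : ℕ) : ℕ := S add b d (d-1) y

section
variable {add : ℕ → ℕ → ℕ} {b : ℕ}

lemma compG (hadd : Computable₂ add) : ∀ k, Computable (fun y => G add b k y)
  | 0 => Computable.id
  | k+1 => hadd.comp (Computable.const b) (compG hadd k)

lemma compM (hadd : Computable₂ add) : ∀ k, Computable (fun y => M add b k y)
  | 0 => Computable.id
  | k+1 => Primrec.nat_min.to_comp.comp (compM hadd k) (compG hadd (k+1))

lemma compS (hadd : Computable₂ add) (d : ℕ) : ∀ k, Computable (fun y => S add b d k y)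
  | 0 => Computable.const 0
  | k+1 => Primrec.nat_add.to_comp.comp (compS hadd d k)
      (Computable.cond
        (Primrec.eq.decide.to_comp.comp ((compG hadd (k+1)).comp (compM hadd (d-1))) Computable.id)
        (Computable.const (k+1)) (Computable.const 0))

lemma compIdx (hadd : Computable₂ add) (d : ℕ) : Computable (fun y => idx add b d y) :=
  compS hadd d (d-1)
end

variable {add : ℕ → ℕ → ℕ} {neg : ℕ → ℕ} {z b : ℕ}

lemma G_eq (ha : ∀ x y w, add (add x y) w = add x (add y w))
    (hz : ∀ x, add z x = x) : ∀ k y, G add b k y = add (iterAdd add z b k) y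
  | 0, y => (hz y).symm
  | k+1, y => by
      show add b (G add b k y) = add (add b (iterAdd add z b k)) y
      rw [G_eq ha hz k y, ha]

lemma G_addk : ∀ j k y, G add b (j + k) y = G add b j (G add b k y)
  | 0, k, y => by rw [Nat.zero_add]; rfl
  | j+1, k, y => by
      rw [Nat.succ_add]
      show add b (G add b (j + k) y) = add b (G add b j (G add b k y))
      rw [G_addk j k y]

lemma cancel (ha : ∀ x y w, add (add x y) w = add x (add y w))
    (hc : ∀ x y, add x y = add y x)
    (hz : ∀ x, add z x = x)
    (hn : ∀ x, add (neg x) x = z)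
    {a w : ℕ} (h : add a w = w) : a = z := by
  have h2 : add (add a w) (neg w) = add w (neg w) := by rw [h]
  rw [ha, hc w (neg w), hn, hc a z, hz] at h2
  exact h2

section
variable (ha : ∀ x y w, add (add x y) w = add x (add y w))
    (hc : ∀ x y, add x y = add y x)
    (hz : ∀ x, add z x = x)
    (hn : ∀ x, add (neg x) x = z)
    {d : ℕ} (hd : 0 < d) (hdb : iterAdd add z b d = z)
    (hleast : ∀ e : ℕ, 0 < e → iterAdd add z b e = z → d ≤ e)
include ha hz hdb

lemma G_d (y : ℕ) : G add b d y = y := by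
  rw [G_eq ha hz, hdb, hz]

lemma G_mod (k y : ℕ) : G add b k y = G add b (k % d) y := by
  conv_lhs => rw [← Nat.div_add_mod k d]
  generalize k / d = q
  induction q with
  | zero => simp
  | succ q ih =>
      have h' : d * (q+1) + k % d = d + (d * q + k % d) := by ring
      rw [h', G_addk, G_d ha hz hdb, ih]

include hc hn hleast

lemma iter_ne {m w : ℕ} (hm : 0 < m) (hmd : m < d) : G add b m w ≠ w := by
  intro h
  rw [G_eq ha hz] at h
  have h1 := cancel ha hc hz hn h
  have := hleast _ hm h1
  omega

lemma G_inj {k1 k2 : ℕ} (h1 : k1 < d) (h2 : k2 < d) {w : ℕ}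
    (h : G add b k1 w = G add b k2 w) : k1 = k2 := by
  rcases le_total k1 k2 with hle | hle
  · by_contra hne
    have hpos : 0 < k2 - k1 := by omega
    have he : G add b (k2 - k1 + k1) w = G add b k1 w := by
      rw [Nat.sub_add_cancel hle]; exact h.symm
    rw [G_addk] at he
    exact iter_ne ha hc hz hn hdb hleast hpos (by omega) he
  · by_contra hne
    have hpos : 0 < k1 - k2 := by omega
    have he : G add b (k1 - k2 + k2) w = G add b k2 w := by
      rw [Nat.sub_add_cancel hle]; exact h
    rw [G_addk] at he
    exact iter_ne ha hc hz hn hdb hleast hpos (by omega) he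

end

lemma M_spec : ∀ k y, (∃ j ≤ k, M add b k y = G add b j y) ∧
    ∀ j ≤ k, M add b k y ≤ G add b j y
  | 0, y => ⟨⟨0, le_refl 0, rfl⟩, by rintro j hj; interval_cases j; exact le_refl _⟩
  | k+1, y => by
      obtain ⟨⟨j0, hj0, hj0e⟩, hmin⟩ := M_spec k y
      have hM : M add b (k+1) y = min (M add b k y) (G add b (k+1) y) := rfl
      constructor
      · rcases le_total (M add b k y) (G add b (k+1) y) with h | h
        · exact ⟨j0, by omega, by rw [hM, min_eq_left h, hj0e]⟩
        · exact ⟨k+1, le_refl _, by rw [hM, min_eq_right h]⟩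
      · intro j hj
        rcases Nat.lt_or_ge j (k+1) with h | h
        · exact le_trans (min_le_left _ _) (hmin j (by omega))
        · have : j = k+1 := by omega
          subst this; exact min_le_right _ _

section
variable (ha : ∀ x y w, add (add x y) w = add x (add y w))
    (hc : ∀ x y, add x y = add y x)
    (hz : ∀ x, add z x = x)
    (hn : ∀ x, add (neg x) x = z)
    {d : ℕ} (hd : 0 < d) (hdb : iterAdd add z b d = z)
    (hleast : ∀ e : ℕ, 0 < e → iterAdd add z b e = z → d ≤ e)
include ha hz hd hdb

lemma exists_idx (y : ℕ) : ∃ k < d, G add b k (M add b (d-1) y) = y := by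
  obtain ⟨⟨j, hj, hje⟩, -⟩ := M_spec (add := add) (b := b) (d-1) y
  rcases Nat.eq_zero_or_pos j with rfl | hjpos
  · exact ⟨0, hd, hje⟩
  · refine ⟨d - j, by omega, ?_⟩
    rw [hje, ← G_addk, Nat.sub_add_cancel (by omega)]
    exact G_d ha hz hdb y

include hc hn hleast

lemma S_spec (y : ℕ) {ks : ℕ} (hks : ks < d) (hG : G add b ks (M add b (d-1) y) = y) :
    ∀ k, k ≤ d - 1 → S add b d k y = if ks ≤ k then ks else 0 := by
  intro k
  induction k with
  | zero => intro _; show 0 = _; split <;> omega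
  | succ k ih =>
      intro hk
      have hcond : (G add b (k+1) (M add b (d-1) y) = y) ↔ k + 1 = ks := by
        constructor
        · intro h
          exact G_inj ha hc hz hn hdb hleast (by omega) hks (h.trans hG.symm)
        · intro h; rw [h]; exact hG
      show S add b d k y + (bif decide (G add b (k+1) (M add b (d-1) y) = y) then k+1 else 0)
          = if ks ≤ k + 1 then ks else 0
      rw [ih (by omega)]
      by_cases h : G add b (k+1) (M add b (d-1) y) = y
      · have h2 := hcond.mp h
        rw [decide_eq_true h, cond_true]
        split <;> split <;> omega
      · have hne : ¬ (k + 1 = ks) := fun e => h (hcond.mpr e)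
        rw [decide_eq_false h, cond_false, Nat.add_zero]
        split <;> split <;> omega

lemma idx_spec (y : ℕ) :
    idx add b d y < d ∧ G add b (idx add b d y) (M add b (d-1) y) = y := by
  obtain ⟨ks, hks, hG⟩ := exists_idx ha hz hd hdb y
  have hs := S_spec ha hc hz hn hd hdb hleast y hks hG (d-1) (le_refl _)
  have hidx : idx add b d y = ks := by
    rw [idx, hs, if_pos (by omega)]
  rw [hidx]; exact ⟨hks, hG⟩

lemma M_shift (y : ℕ) : M add b (d-1) (add b y) = M add b (d-1) y := by
  have hby : add b y = G add b 1 y := rfl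
  obtain ⟨⟨j1, hj1, hj1e⟩, hmin1⟩ := M_spec (add := add) (b := b) (d-1) (add b y)
  obtain ⟨⟨j0, hj0, hj0e⟩, hmin0⟩ := M_spec (add := add) (b := b) (d-1) y
  apply le_antisymm
  · have hj' : (j0 + d - 1) % d ≤ d - 1 := by
      have := Nat.mod_lt (j0 + d - 1) hd; omega
    have he : G add b ((j0 + d - 1) % d) (add b y) = G add b j0 y := by
      rw [hby, ← G_addk]
      rw [G_mod ha hz hdb ((j0 + d - 1) % d + 1)]
      rw [Nat.mod_add_mod, show j0 + d - 1 + 1 = j0 + d by omega]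
      rw [Nat.add_mod_right, Nat.mod_eq_of_lt (by omega)]
    calc M add b (d-1) (add b y) ≤ G add b ((j0 + d - 1) % d) (add b y) := hmin1 _ hj'
      _ = G add b j0 y := he
      _ = M add b (d-1) y := hj0e.symm
  · have hj' : (j1 + 1) % d ≤ d - 1 := by
      have := Nat.mod_lt (j1 + 1) hd; omega
    have he : G add b ((j1 + 1) % d) y = G add b j1 (add b y) := by
      rw [hby, ← G_addk, ← G_mod ha hz hdb]
    calc M add b (d-1) y ≤ G add b ((j1+1) % d) y := hmin0 _ hj'
      _ = G add b j1 (add b y) := he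
      _ = M add b (d-1) (add b y) := hj1e.symm

lemma idx_shift (y : ℕ) : idx add b d (add b y) = (idx add b d y + 1) % d := by
  obtain ⟨hlt, hGy⟩ := idx_spec ha hc hz hn hd hdb hleast y
  obtain ⟨hlt', hGy'⟩ := idx_spec ha hc hz hn hd hdb hleast (add b y)
  have key : G add b ((idx add b d y + 1) % d) (M add b (d-1) (add b y)) = add b y := by
    rw [M_shift ha hc hz hn hd hdb hleast y]
    rw [← G_mod ha hz hdb]
    rw [show idx add b d y + 1 = 1 + idx add b d y by omega, G_addk, hGy]
    rfl
  exact G_inj ha hc hz hn hdb hleast hlt' (Nat.mod_lt _ hd) (hGy'.trans key.symm)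

end
end CCF

/-- For a computable abelian group structure `(add, neg, z)` on `ℕ` and `b ≠ z` of finite
order `d`: if `d` is even there is a computable `2`-coloring of `ℕ` with no monochromatic
solutions of `x - y = b`, and if `d` is odd there is such a computable `3`-coloring. -/
theorem computable_coloring_finite_order
    (add : ℕ → ℕ → ℕ) (neg : ℕ → ℕ) (z : ℕ)
    (hadd : Computable₂ add) (hneg : Computable neg)
    (add_assoc : ∀ x y w, add (add x y) w = add x (add y w))
    (add_comm : ∀ x y, add x y = add y x)
    (zero_add : ∀ x, add z x = x)
    (neg_add : ∀ x, add (neg x) x = z)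
    (b : ℕ) (hb : b ≠ z)
    (d : ℕ) (hd : 0 < d) (hdb : iterAdd add z b d = z)
    (hleast : ∀ e : ℕ, 0 < e → iterAdd add z b e = z → d ≤ e) :
    (Even d → ∃ c : ℕ → Fin 2, Computable c ∧
        ¬ ∃ x y : ℕ, c x = c y ∧ add x (neg y) = b) ∧
    (Odd d → ∃ c : ℕ → Fin 3, Computable c ∧
        ¬ ∃ x y : ℕ, c x = c y ∧ add x (neg y) = b) := by
  have hsol : ∀ x y : ℕ, add x (neg y) = b → x = add b y := by
    intro x y h
    have h2 : add (add x (neg y)) y = add b y := by rw [h]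
    rw [add_assoc, neg_add, add_comm x z, zero_add] at h2
    exact h2
  have hidx := fun y => CCF.idx_spec add_assoc add_comm zero_add neg_add hd hdb hleast y
  have hshift := fun y => CCF.idx_shift add_assoc add_comm zero_add neg_add hd hdb hleast y
  have hcomp := CCF.compIdx (b := b) hadd d
  constructor
  · -- even case
    intro hev
    obtain ⟨m, hm⟩ := hev
    refine ⟨fun y => if CCF.idx add b d y % 2 = 0 then (0 : Fin 2) else 1, ?_, ?_⟩
    · rw [← Computable.encode_iff]
      have he : (fun y => Encodable.encode (if CCF.idx add b d y % 2 = 0 then (0 : Fin 2) else 1))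
          = fun y => bif decide (CCF.idx add b d y % 2 = 0) then 0 else 1 := by
        funext y
        by_cases h : CCF.idx add b d y % 2 = 0 <;> simp [h] <;> rfl
      rw [he]
      exact Computable.cond
        (Primrec.eq.decide.to_comp.comp
          (Primrec.nat_mod.to_comp.comp hcomp (Computable.const 2)) (Computable.const 0))
        (Computable.const 0) (Computable.const 1)
    · rintro ⟨x, y, hcxy, heq⟩
      have hx := hsol x y heq
      subst hx
      dsimp only at hcxy
      have h1 := hshift y
      have hlt := (hidx y).1
      have hne2 : CCF.idx add b d (add b y) % 2 ≠ CCF.idx add b d y % 2 := by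
        rcases Nat.lt_or_ge (CCF.idx add b d y + 1) d with h | h
        · rw [h1, Nat.mod_eq_of_lt h]; omega
        · have hde : CCF.idx add b d y = d - 1 := by omega
          rw [h1, hde, show d - 1 + 1 = d by omega, Nat.mod_self]
          omega
      by_cases hpx : CCF.idx add b d (add b y) % 2 = 0 <;>
        by_cases hpy : CCF.idx add b d y % 2 = 0
      · omega
      · rw [if_pos hpx, if_neg hpy] at hcxy; exact absurd hcxy (by decide)
      · rw [if_neg hpx, if_pos hpy] at hcxy; exact absurd hcxy (by decide)
      · omega
  · -- odd case
    intro hodd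
    obtain ⟨m, hm⟩ := hodd
    have hd2 : d ≠ 1 := by
      intro h1
      apply hb
      have h2 : iterAdd add z b 1 = add b z := rfl
      rw [h1] at hdb
      rw [h2, add_comm b z, zero_add] at hdb
      exact hdb
    have hd3 : 3 ≤ d := by omega
    refine ⟨fun y => if CCF.idx add b d y = d - 1 then (2 : Fin 3)
        else if CCF.idx add b d y % 2 = 0 then 0 else 1, ?_, ?_⟩
    · rw [← Computable.encode_iff]
      have he : (fun y => Encodable.encode (if CCF.idx add b d y = d - 1 then (2 : Fin 3)
          else if CCF.idx add b d y % 2 = 0 then 0 else 1))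
          = fun y => bif decide (CCF.idx add b d y = d - 1) then 2
              else bif decide (CCF.idx add b d y % 2 = 0) then 0 else 1 := by
        funext y
        by_cases h : CCF.idx add b d y = d - 1
        · simp [h]; rfl
        · by_cases h2 : CCF.idx add b d y % 2 = 0 <;> simp [h, h2] <;> rfl
      rw [he]
      exact Computable.cond (Primrec.eq.decide.to_comp.comp hcomp (Computable.const (d-1)))
        (Computable.const 2)
        (Computable.cond
          (Primrec.eq.decide.to_comp.comp
            (Primrec.nat_mod.to_comp.comp hcomp (Computable.const 2)) (Computable.const 0))
          (Computable.const 0) (Computable.const 1))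
    · rintro ⟨x, y, hcxy, heq⟩
      have hx := hsol x y heq
      subst hx
      dsimp only at hcxy
      have h1 := hshift y
      have hlt := (hidx y).1
      by_cases hke : CCF.idx add b d y = d - 1
      · have hx0 : CCF.idx add b d (add b y) = 0 := by
          rw [h1, hke, show d - 1 + 1 = d by omega, Nat.mod_self]
        rw [hx0, if_neg (by omega), if_pos (by norm_num), hke, if_pos rfl] at hcxy
        exact absurd hcxy (by decide)
      · have hxk : CCF.idx add b d (add b y) = CCF.idx add b d y + 1 := by
          rw [h1, Nat.mod_eq_of_lt (by omega)]
        by_cases hke1 : CCF.idx add b d y + 1 = d - 1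
        · rw [hxk, if_pos hke1, if_neg hke] at hcxy
          by_cases hpy : CCF.idx add b d y % 2 = 0
          · rw [if_pos hpy] at hcxy; exact absurd hcxy (by decide)
          · rw [if_neg hpy] at hcxy; exact absurd hcxy (by decide)
        · rw [hxk, if_neg hke1, if_neg hke] at hcxy
          by_cases hpx : (CCF.idx add b d y + 1) % 2 = 0 <;>
            by_cases hpy : CCF.idx add b d y % 2 = 0
          · omega
          · rw [if_pos hpx, if_neg hpy] at hcxy; exact absurd hcxy (by decide)
          · rw [if_neg hpx, if_pos hpy] at hcxy; exact absurd hcxy (by decide)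
          · omega
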